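/- arXiv:2201.11363 — 3 statements merged into one kernel-verified Lean document; each statement's English description precedes it below -/
import Mathlib

section
/- For a finite metric space (X, d) with a weight function w : X → ℝ satisfying ∑_{y ∈ X} e^{-d(x,y)} w(y) = 1 for all x ∈ X, the value ∑_{x ∈ X} w(x) is independent of the choice of weight function: if w and w' are both weight functions for (X, d), then ∑_{x ∈ X} w(x) = ∑_{x ∈ X} w'(x). -/
/-- The magnitude of a finite metric space is independent of the choice of
weight function: if `w` and `w'` both satisfy
`∑ y, exp (-dist x y) * w y = 1` for all `x`, then `∑ x, w x = ∑ x, w' x`. -/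
theorem magnitude_weight_independent {X : Type*} [Fintype X] [MetricSpace X]
    (w w' : X → ℝ)
    (hw : ∀ x : X, ∑ y : X, Real.exp (-dist x y) * w y = 1)
    (hw' : ∀ x : X, ∑ y : X, Real.exp (-dist x y) * w' y = 1) :
    ∑ x : X, w x = ∑ x : X, w' x := by
  calc ∑ x : X, w x
      = ∑ x : X, ∑ y : X, w x * (Real.exp (-dist x y) * w' y) := by
        simp [← Finset.mul_sum, hw']
    _ = ∑ y : X, ∑ x : X, w x * (Real.exp (-dist x y) * w' y) := Finset.sum_comm
    _ = ∑ y : X, w' y * ∑ x : X, Real.exp (-dist y x) * w x := by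
        refine Finset.sum_congr rfl fun y _ => ?_
        rw [Finset.mul_sum]
        refine Finset.sum_congr rfl fun x _ => ?_
        rw [dist_comm]; ring
    _ = ∑ y : X, w' y := by simp [hw]
end

section
/- For a closed interval X = [a, b] ⊂ ℝ with a < b, with the Euclidean distance scaled by R > 0, the magnitude function satisfies M_X(R) = (b - a)/2 · R + 1. Equivalently, the measure μ_R = (R/2)·Leb|_{[a,b]} + (1/2)(δ_a + δ_b) satisfies ∫ e^{-R|x-y|} dμ_R(y) = 1 for all x ∈ [a,b], and μ_R([a,b]) = (b-a)R/2 + 1. -/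
/-!
Splitting at `x`, the kernel `e^{-R|x-y|}` integrates over `[a, x]` and `[x, b]` to
`(1 - e^{-R(x-a)})/R` and `(1 - e^{-R(b-x)})/R`. With density `R/2` this gives
`1 - (e^{-R(x-a)} + e^{-R(b-x)})/2`, and the missing half is exactly what the point masses `1/2`
at the endpoints contribute.
-/

open MeasureTheory Real Set intervalIntegral

theorem integral_exp_neg_mul_of_ne_zero {R : ℝ} (hR : R ≠ 0) (L : ℝ) :
    ∫ t in (0 : ℝ)..L, exp (-R * t) = (1 - exp (-R * L)) / R := by
  rw [integral_comp_mul_left (fun t => exp t) (neg_ne_zero.mpr hR), integral_exp, mul_zero,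
    exp_zero, smul_eq_mul]
  field_simp
  ring

theorem integral_exp_neg_mul_abs_sub {R a b x : ℝ} (hR : R ≠ 0) (hx : x ∈ Icc a b) :
    ∫ y in a..b, exp (-R * |x - y|) =
      (1 - exp (-R * (x - a))) / R + (1 - exp (-R * (b - x))) / R := by
  have hcont : Continuous fun y => exp (-R * |x - y|) := by fun_prop
  have left : ∫ y in a..x, exp (-R * |x - y|) = ∫ y in a..x, exp (-R * (x - y)) :=
    integral_congr fun y hy => by
      rw [uIcc_of_le hx.1] at hy
      rw [abs_of_nonneg (sub_nonneg.mpr hy.2)]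
  have right : ∫ y in x..b, exp (-R * |x - y|) = ∫ y in x..b, exp (-R * (y - x)) :=
    integral_congr fun y hy => by
      rw [uIcc_of_le hx.2] at hy
      rw [abs_sub_comm, abs_of_nonneg (sub_nonneg.mpr hy.1)]
  rw [← integral_add_adjacent_intervals (hcont.intervalIntegrable a x)
      (hcont.intervalIntegrable x b), left, right,
    integral_comp_sub_left (fun t => exp (-R * t)), integral_comp_sub_right (fun t => exp (-R * t)),
    sub_self, integral_exp_neg_mul_of_ne_zero hR, integral_exp_neg_mul_of_ne_zero hR]

section IntervalWithEndpointMasses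

variable {a b c d : ℝ}

theorem integral_smul_restrict_Icc_add_smul_dirac {E : Type*} [NormedAddCommGroup E]
    [NormedSpace ℝ E] [CompleteSpace E] {f : ℝ → E} (hf : Continuous f) (hab : a ≤ b)
    (hc : 0 ≤ c) (hd : 0 ≤ d) :
    ∫ y, f y ∂(ENNReal.ofReal c • volume.restrict (Icc a b) +
        ENNReal.ofReal d • (Measure.dirac a + Measure.dirac b)) =
      c • (∫ y in a..b, f y) + d • (f a + f b) := by
  have hdirac : ∀ z, Integrable f (Measure.dirac z) := fun _ => integrable_dirac enorm_lt_top
  rw [MeasureTheory.integral_add_measure ((hf.integrableOn_Icc).smul_measure ENNReal.ofReal_ne_top)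
      (((hdirac a).add_measure (hdirac b)).smul_measure ENNReal.ofReal_ne_top),
    MeasureTheory.integral_smul_measure, MeasureTheory.integral_smul_measure,
    MeasureTheory.integral_add_measure (hdirac a) (hdirac b),
    integral_dirac, integral_dirac, ENNReal.toReal_ofReal hc, ENNReal.toReal_ofReal hd,
    integral_Icc_eq_integral_Ioc, intervalIntegral.integral_of_le hab]

theorem smul_restrict_Icc_add_smul_dirac_apply_Icc (hab : a ≤ b) (hc : 0 ≤ c) (hd : 0 ≤ d) :
    (ENNReal.ofReal c • volume.restrict (Icc a b) +
        ENNReal.ofReal d • (Measure.dirac a + Measure.dirac b)) (Icc a b) =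
      ENNReal.ofReal (c * (b - a) + 2 * d) := by
  have hba : 0 ≤ b - a := sub_nonneg.mpr hab
  simp only [Measure.add_apply, Measure.smul_apply, smul_eq_mul,
    Measure.restrict_apply measurableSet_Icc, inter_self, Real.volume_Icc,
    Measure.dirac_apply_of_mem (left_mem_Icc.mpr hab),
    Measure.dirac_apply_of_mem (right_mem_Icc.mpr hab)]
  rw [ENNReal.ofReal_add (by positivity) (by positivity), ENNReal.ofReal_mul hc,
    ENNReal.ofReal_mul zero_le_two, ENNReal.ofReal_ofNat, one_add_one_eq_two, mul_comm _ 2]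

end IntervalWithEndpointMasses

/-- Magnitude of an interval `[a,b]` with scaled Euclidean distance:
the measure `μ_R = (R/2)·Leb|_[a,b] + (1/2)(δ_a + δ_b)` is a weight measure,
i.e. `∫ e^{-R|x-y|} dμ_R(y) = 1` for all `x ∈ [a,b]`, and its total mass is
`(b-a)R/2 + 1`, which is therefore the magnitude `M_X(R) = (b-a)/2·R + 1`. -/
theorem magnitude_interval (a b R : ℝ) (hab : a < b) (hR : 0 < R) :
    let μ : Measure ℝ :=
      ENNReal.ofReal (R / 2) • volume.restrict (Set.Icc a b) +
        ENNReal.ofReal (1 / 2) • (Measure.dirac a + Measure.dirac b)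
    (∀ x ∈ Set.Icc a b, ∫ y, Real.exp (-R * |x - y|) ∂μ = 1) ∧
      (μ (Set.Icc a b)).toReal = (b - a) * R / 2 + 1 := by
  intro μ
  have hR2 : 0 ≤ R / 2 := by positivity
  refine ⟨fun x hx => ?_, ?_⟩
  · rw [integral_smul_restrict_Icc_add_smul_dirac (by fun_prop) hab.le hR2 one_half_pos.le,
      integral_exp_neg_mul_abs_sub hR.ne' hx, abs_of_nonneg (sub_nonneg.mpr hx.1), abs_sub_comm,
      abs_of_nonneg (sub_nonneg.mpr hx.2), smul_eq_mul, smul_eq_mul]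
    field_simp
    ring
  · rw [smul_restrict_Icc_add_smul_dirac_apply_Icc hab.le hR2 one_half_pos.le,
      ENNReal.toReal_ofReal (by nlinarith)]
    ring
end

section
/- Suppose e : (0,∞) → ℂ is continuous, e(t) = O(t^{-∞}) as t → ∞ (i.e., decays faster than any polynomial), and e admits an asymptotic expansion e(t) ∼ ∑_{j=0}^∞ a_j t^{β_j} as t → 0⁺, where β_j is a strictly increasing real sequence with β_j → +∞. Then the Mellin transform f(s) = ∫_0^∞ t^{s-1} e(t) dt, initially holomorphic for Re(s) > −β_0, extends meromorphically to ℂ with at most simple poles at s = −β_j with residue a_j. -/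
/-!
Subtracting the truncated expansion `∑_{j<N} a_j t^{β_j}` on `(0, 1]` from `e` leaves a
remainder which is `O(t^{β_N})` at `0` and still decays rapidly at `∞`, so its Mellin transform
is holomorphic on `-β_N < re s`, while the subtracted terms have the explicit Mellin transforms
`a_j / (s + β_j)`. These continuations agree on their common half planes, so they glue to one
function, and the residues are read off from the simple fractions.
-/

open MeasureTheory Set Filter
open Complex Topology Asymptotics

section RapidDecay

variable {E : Type*} [NormedAddCommGroup E] [NormedSpace ℂ E] {f : ℝ → E} {b : ℝ} {s : ℂ}

theorem mellinConvergent_of_rapidDecay (hfc : LocallyIntegrableOn f (Ioi 0))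
    (hf_top : ∀ M : ℕ, f =O[atTop] (· ^ (-(M : ℝ)))) (hf_bot : f =O[𝓝[>] 0] (· ^ (-b)))
    (hs : b < s.re) : MellinConvergent f s :=
  have ⟨M, hM⟩ := exists_nat_gt s.re
  mellinConvergent_of_isBigO_rpow hfc (hf_top M) hM hf_bot hs

theorem mellin_differentiableAt_of_rapidDecay (hfc : LocallyIntegrableOn f (Ioi 0))
    (hf_top : ∀ M : ℕ, f =O[atTop] (· ^ (-(M : ℝ)))) (hf_bot : f =O[𝓝[>] 0] (· ^ (-b)))
    (hs : b < s.re) : DifferentiableAt ℂ (mellin f) s :=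
  have ⟨M, hM⟩ := exists_nat_gt s.re
  mellin_differentiableAt_of_isBigO_rpow hfc (hf_top M) hM hf_bot hs

end RapidDecay

theorem hasMellin_indicator_Ioc_const_mul_cpow (c b : ℂ) {s : ℂ} (hs : 0 < s.re + b.re) :
    HasMellin ((Ioc 0 1).indicator fun t : ℝ => c * (t : ℂ) ^ b) s (c / (s + b)) := by
  have h := hasMellin_cpow_Ioc b hs
  have hc := hasMellin_const_smul h.1 c
  simpa only [smul_eq_mul, ← indicator_const_mul, h.2, mul_one_div] using hc

theorem tendsto_add_mul_add_div {g : ℂ → ℂ} {w : ℂ} (c : ℂ) (hg : ContinuousAt g (-w)) :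
    Tendsto (fun z => (z + w) * (g z + c / (z + w))) (𝓝[≠] (-w)) (𝓝 c) := by
  have hlim : Tendsto (fun z => (z + w) * g z + c) (𝓝 (-w)) (𝓝 c) := by
    have hcont : ContinuousAt (fun z => (z + w) * g z + c) (-w) := by fun_prop
    simpa using hcont.tendsto
  refine (hlim.mono_left nhdsWithin_le_nhds).congr' ?_
  filter_upwards [self_mem_nhdsWithin] with z hz
  have hzw : z + w ≠ 0 := fun h => hz (eq_neg_of_add_eq_zero_left h)
  rw [mul_add, mul_div_cancel₀ _ hzw]

structure HasMellinExpansion (e : ℝ → ℂ) (a : ℕ → ℂ) (β : ℕ → ℝ) : Prop where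
  continuousOn : ContinuousOn e (Ioi 0)
  decay_atTop : ∀ M : ℕ, ∃ C : ℝ, ∀ t : ℝ, 1 ≤ t → ‖e t‖ ≤ C * t ^ (-(M : ℝ))
  expansion : ∀ N : ℕ, ∃ C : ℝ, ∀ t ∈ Ioo (0 : ℝ) 1,
    ‖e t - ∑ j ∈ Finset.range (N + 1), a j * (t : ℂ) ^ (β j : ℂ)‖ ≤ C * t ^ (β (N + 1))

noncomputable def expansionRemainder (e : ℝ → ℂ) (a : ℕ → ℂ) (β : ℕ → ℝ) (N : ℕ) (t : ℝ) : ℂ :=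
  e t - (Ioc 0 1).indicator (fun t : ℝ => ∑ j ∈ Finset.range N, a j * (t : ℂ) ^ (β j : ℂ)) t

/-- The continuation of `mellin e` to the half plane `-β N < re s`. -/
noncomputable def mellinContinuation (e : ℝ → ℂ) (a : ℕ → ℂ) (β : ℕ → ℝ) (N : ℕ) (s : ℂ) : ℂ :=
  mellin (expansionRemainder e a β N) s + ∑ j ∈ Finset.range N, a j / (s + β j)

variable {e : ℝ → ℂ} {a : ℕ → ℂ} {β : ℕ → ℝ} {s : ℂ}

theorem expansionRemainder_zero : expansionRemainder e a β 0 = e := by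
  funext t
  simp [expansionRemainder]

theorem expansionRemainder_eq_succ_add (N : ℕ) :
    expansionRemainder e a β N = fun t => expansionRemainder e a β (N + 1) t +
      (Ioc 0 1).indicator (fun t : ℝ => a N * (t : ℂ) ^ (β N : ℂ)) t := by
  funext t
  by_cases ht : t ∈ Ioc (0 : ℝ) 1 <;>
    simp only [expansionRemainder, ht, indicator_of_mem, indicator_of_notMem, not_false_eq_true,
      Finset.sum_range_succ] <;> ring

theorem expansionRemainder_of_one_lt (N : ℕ) {t : ℝ} (ht : 1 < t) :
    expansionRemainder e a β N t = e t := by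
  simp [expansionRemainder, indicator_of_notMem fun h : t ∈ Ioc 0 1 => ht.not_ge h.2]

theorem locallyIntegrableOn_expansionRemainder (he : ContinuousOn e (Ioi 0)) (N : ℕ) :
    LocallyIntegrableOn (expansionRemainder e a β N) (Ioi 0) := by
  have hsum : ContinuousOn (fun t : ℝ => ∑ j ∈ Finset.range N, a j * (t : ℂ) ^ (β j : ℂ))
      (Ioi 0) := by
    refine continuousOn_finsetSum _ fun j _ => continuousOn_const.mul fun t ht => ?_
    exact continuous_ofReal.continuousWithinAt.cpow continuousWithinAt_const
      (ofReal_mem_slitPlane.mpr ht)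
  refine (he.locallyIntegrableOn measurableSet_Ioi).sub fun t ht => ?_
  obtain ⟨U, hU, hint⟩ := hsum.locallyIntegrableOn (μ := volume) measurableSet_Ioi t ht
  exact ⟨U, hU, hint.indicator measurableSet_Ioc⟩

theorem expansionRemainder_isBigO_atTop
    (hdecay : ∀ M : ℕ, ∃ C : ℝ, ∀ t : ℝ, 1 ≤ t → ‖e t‖ ≤ C * t ^ (-(M : ℝ))) (N M : ℕ) :
    expansionRemainder e a β N =O[atTop] (· ^ (-(M : ℝ))) := by
  obtain ⟨C, hC⟩ := hdecay M
  refine IsBigO.of_bound C ?_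
  filter_upwards [eventually_gt_atTop 1] with t ht
  rw [expansionRemainder_of_one_lt N ht, Real.norm_of_nonneg (by positivity)]
  exact hC t ht.le

theorem expansionRemainder_succ_isBigO_nhdsGT_zero {N : ℕ}
    (hexp : ∃ C : ℝ, ∀ t ∈ Ioo (0 : ℝ) 1,
      ‖e t - ∑ j ∈ Finset.range (N + 1), a j * (t : ℂ) ^ (β j : ℂ)‖ ≤ C * t ^ (β (N + 1))) :
    expansionRemainder e a β (N + 1) =O[𝓝[>] 0] (· ^ β (N + 1)) := by
  obtain ⟨C, hC⟩ := hexp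
  refine IsBigO.of_bound C ?_
  filter_upwards [Ioo_mem_nhdsGT zero_lt_one] with t ht
  rw [expansionRemainder, indicator_of_mem (Ioo_subset_Ioc_self ht),
    Real.norm_of_nonneg (Real.rpow_pos_of_pos ht.1 _).le]
  exact hC t ht

namespace HasMellinExpansion

theorem mellinConvergent_expansionRemainder_succ (h : HasMellinExpansion e a β) {N : ℕ}
    (hs : -β (N + 1) < s.re) : MellinConvergent (expansionRemainder e a β (N + 1)) s :=
  mellinConvergent_of_rapidDecay (locallyIntegrableOn_expansionRemainder h.continuousOn _)
    (expansionRemainder_isBigO_atTop h.decay_atTop _)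
    (by simpa only [neg_neg] using expansionRemainder_succ_isBigO_nhdsGT_zero (h.expansion N)) hs

theorem differentiableAt_mellin_expansionRemainder_succ (h : HasMellinExpansion e a β) {N : ℕ}
    (hs : -β (N + 1) < s.re) : DifferentiableAt ℂ (mellin (expansionRemainder e a β (N + 1))) s :=
  mellin_differentiableAt_of_rapidDecay (locallyIntegrableOn_expansionRemainder h.continuousOn _)
    (expansionRemainder_isBigO_atTop h.decay_atTop _)
    (by simpa only [neg_neg] using expansionRemainder_succ_isBigO_nhdsGT_zero (h.expansion N)) hs

theorem mellinContinuation_succ (h : HasMellinExpansion e a β) (hβ : Monotone β) {N : ℕ}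
    (hs : -β N < s.re) : mellinContinuation e a β (N + 1) s = mellinContinuation e a β N s := by
  have hs' : -β (N + 1) < s.re := (neg_le_neg (hβ N.le_succ)).trans_lt hs
  have hterm := hasMellin_indicator_Ioc_const_mul_cpow (a N) (β N) (s := s)
    (by rw [ofReal_re]; linarith)
  have hsplit := hasMellin_add (h.mellinConvergent_expansionRemainder_succ hs') hterm.1
  rw [← expansionRemainder_eq_succ_add, hterm.2] at hsplit
  rw [mellinContinuation, mellinContinuation, hsplit.2, Finset.sum_range_succ]
  ring

theorem mellinContinuation_eq_of_le (h : HasMellinExpansion e a β) (hβ : Monotone β) {N M : ℕ}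
    (hNM : N ≤ M) (hs : -β N < s.re) :
    mellinContinuation e a β M s = mellinContinuation e a β N s := by
  induction M, hNM using Nat.le_induction with
  | base => rfl
  | succ M hNM ih => rw [h.mellinContinuation_succ hβ ((neg_le_neg (hβ hNM)).trans_lt hs), ih]

theorem eventuallyEq_mellinContinuation (h : HasMellinExpansion e a β) (hβ : Monotone β)
    {n : ℂ → ℕ} (hn : ∀ z, -β (n z) < z.re) {M : ℕ} (hM : -β M < s.re) :
    (fun z => mellinContinuation e a β (n z) z) =ᶠ[𝓝 s] mellinContinuation e a β M := by
  filter_upwards [(isOpen_lt continuous_const continuous_re).mem_nhds hM] with z hz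
  rw [← h.mellinContinuation_eq_of_le hβ (le_max_left (n z) M) (hn z),
    h.mellinContinuation_eq_of_le hβ (le_max_right (n z) M) hz]

theorem differentiableAt_mellinContinuation_succ (h : HasMellinExpansion e a β) {N : ℕ}
    (hs : -β (N + 1) < s.re) (hpole : ∀ j ≤ N, s ≠ -(β j : ℂ)) :
    DifferentiableAt ℂ (mellinContinuation e a β (N + 1)) s := by
  refine (h.differentiableAt_mellin_expansionRemainder_succ hs).add
    (DifferentiableAt.fun_sum fun j hj => ?_)
  have hj : j ≤ N := Nat.lt_succ_iff.mp (Finset.mem_range.mp hj)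
  exact (differentiableAt_const _).div (differentiableAt_id.add_const _)
    fun h0 => hpole j hj (eq_neg_of_add_eq_zero_left h0)

theorem tendsto_mul_mellinContinuation_succ (h : HasMellinExpansion e a β) (hβ : StrictMono β)
    (N : ℕ) : Tendsto (fun z => (z + β N) * mellinContinuation e a β (N + 1) z)
      (𝓝[≠] (-(β N : ℂ))) (𝓝 (a N)) := by
  have hregular : ContinuousAt
      (fun z => mellin (expansionRemainder e a β (N + 1)) z +
        ∑ j ∈ Finset.range N, a j / (z + β j)) (-(β N : ℂ)) := by
    refine (h.differentiableAt_mellin_expansionRemainder_succ ?_).continuousAt.add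
      (DifferentiableAt.fun_sum (𝕜 := ℂ) fun j hj => ?_).continuousAt
    · simpa using hβ N.lt_succ_self
    · have hne : -(β N : ℂ) + β j ≠ 0 := by
        rw [← ofReal_neg, ← ofReal_add, ofReal_ne_zero]
        linarith [hβ (Finset.mem_range.mp hj)]
      exact (differentiableAt_const _).div (differentiableAt_id.add_const _) hne
  simpa only [mellinContinuation, Finset.sum_range_succ, add_assoc] using
    tendsto_add_mul_add_div (a N) hregular

end HasMellinExpansion

/-- Meromorphic continuation of the Mellin transform.  If `e : (0,∞) → ℂ` is
continuous, decays faster than any polynomial at `∞`, and has an asymptotic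
expansion `e(t) ∼ ∑ a_j t^{β_j}` as `t → 0⁺` (with `β_j` strictly increasing
to `+∞`), then `f(s) = ∫_0^∞ t^{s-1} e(t) dt`, holomorphic for `Re s > -β₀`,
extends to `F : ℂ → ℂ` holomorphic away from the points `-β_j`, with at most
simple poles at `s = -β_j` of residue `a_j`. -/
theorem mellin_meromorphic_continuation
    (e : ℝ → ℂ) (he : ContinuousOn e (Ioi 0))
    (hinf : ∀ N : ℕ, ∃ C : ℝ, ∀ t : ℝ, 1 ≤ t → ‖e t‖ ≤ C * t ^ (-(N : ℝ)))
    (a : ℕ → ℂ) (β : ℕ → ℝ) (hβ : StrictMono β) (hβtop : Tendsto β atTop atTop)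
    (hexp : ∀ N : ℕ, ∃ C : ℝ, ∀ t ∈ Ioo (0 : ℝ) 1,
      ‖e t - ∑ j ∈ Finset.range (N + 1), a j * (t : ℂ) ^ (β j : ℂ)‖ ≤ C * t ^ (β (N + 1))) :
    ∃ F : ℂ → ℂ,
      (∀ s : ℂ, -β 0 < s.re →
        F s = ∫ t in Ioi (0 : ℝ), (t : ℂ) ^ (s - 1) * e t) ∧
      (∀ s : ℂ, (∀ j : ℕ, s ≠ -(β j : ℂ)) → DifferentiableAt ℂ F s) ∧
      (∀ j : ℕ, Tendsto (fun s : ℂ => (s + (β j : ℂ)) * F s)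
        (nhdsWithin (-(β j : ℂ)) {(-(β j : ℂ))}ᶜ) (nhds (a j))) := by
  have h : HasMellinExpansion e a β := ⟨he, hinf, hexp⟩
  have hlevel (s : ℂ) : ∃ N, -β N < s.re :=
    (hβtop.eventually_gt_atTop (-s.re)).exists.imp fun _ hN => by linarith
  choose n hn using hlevel
  have hF {s : ℂ} {M : ℕ} (hM : -β M < s.re) :=
    h.eventuallyEq_mellinContinuation hβ.monotone hn hM
  refine ⟨fun z => mellinContinuation e a β (n z) z, fun s hs => ?_, fun s hs => ?_, fun j => ?_⟩
  · refine (hF hs).eq_of_nhds.trans ?_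
    rw [mellinContinuation, expansionRemainder_zero, Finset.sum_range_zero, add_zero]
    rfl
  · have hs' : -β (n s + 1) < s.re := (neg_le_neg (hβ.monotone (n s).le_succ)).trans_lt (hn s)
    exact (h.differentiableAt_mellinContinuation_succ hs' fun j _ => hs j).congr_of_eventuallyEq
      (hF hs')
  · have hj : -β (j + 1) < (-(β j : ℂ)).re := by simpa using hβ j.lt_succ_self
    exact (h.tendsto_mul_mellinContinuation_succ hβ j).congr'
      ((EventuallyEq.rfl.mul (hF hj)).filter_mono nhdsWithin_le_nhds).symm
end
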